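/- arXiv:2310.03216 — 7 statements merged into one kernel-verified Lean document; each statement's English description precedes it below -/
import Mathlib

section
/- Let d ≥ 1, n ≥ 1 and let a_1, …, a_n ∈ ℕ^d \ {0}. In the formal power series ring R = ℂ[[x_1,…,x_d,y_1,…,y_d]] let I_Δ be the ideal generated by the binomials x^{a_1} − y^{a_1}, …, x^{a_n} − y^{a_n}. Let f be a homogeneous polynomial of some degree k in the variables u_1,…,u_d, and let σ_x, σ_y : ℂ[[u_1,…,u_d]] → R be the ℂ-algebra maps induced by u_i ↦ x_i and u_i ↦ y_i. If σ_x(f) − σ_y(f) is integral over I_Δ, then for every α ∈ ℕ^d such that the coefficient of u^α in f is nonzero, the binomial x^α − y^α is integral over I_Δ. -/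
/-!
The torus `(ℂˣ)ᵈ` acts on `ℂ[[x, y]]` by `xᵢ ↦ tᵢ xᵢ, yᵢ ↦ tᵢ yᵢ`. It multiplies each generator
`x^a - y^a` of `I_Δ` by the scalar `t^a`, so it preserves `I_Δ` and therefore also the elements
integral over `I_Δ`; these form an ideal, being the degree-one part of the integral closure of the
Rees algebra `R[I_Δ t]` in `R[t]`. Writing `f(x) - f(y) = ∑ c_β (x^β - y^β)`, the action shows
that `∑ t^β c_β (x^β - y^β)` is integral over `I_Δ` for every `t ∈ ℂᵈ`. Distinct monomials are
linearly independent functions on `ℂᵈ`, so each term `c_β (x^β - y^β)` is a linear combination of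
these elements, and dividing by `c_β ≠ 0` gives the claim.
-/

/-- An element `f` of a commutative ring is *integral over the ideal* `I` if it satisfies an
equation `f ^ m + a 1 * f ^ (m-1) + ⋯ + a (m-1) * f + a m = 0` with `a j ∈ I ^ j`. -/
def IsIntegralOverIdeal {R : Type*} [CommRing R] (I : Ideal R) (f : R) : Prop :=
  ∃ m : ℕ, 0 < m ∧ ∃ a : ℕ → R, (∀ j, 1 ≤ j → j ≤ m → a j ∈ I ^ j) ∧
    f ^ m + ∑ j ∈ Finset.Icc 1 m, a j * f ^ (m - j) = 0

/-- The monomial `x ^ α` in `ℂ[[x_1,…,x_d,y_1,…,y_d]]`, the `x`-variables being indexed by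
the left summand of `Fin d ⊕ Fin d`. -/
noncomputable def Xmon (d : ℕ) (α : Fin d →₀ ℕ) : MvPowerSeries (Fin d ⊕ Fin d) ℂ :=
  MvPowerSeries.monomial (R := ℂ) (α.embDomain (Function.Embedding.inl)) 1

/-- The monomial `y ^ α` in `ℂ[[x_1,…,x_d,y_1,…,y_d]]`. -/
noncomputable def Ymon (d : ℕ) (α : Fin d →₀ ℕ) : MvPowerSeries (Fin d ⊕ Fin d) ℂ :=
  MvPowerSeries.monomial (R := ℂ) (α.embDomain (Function.Embedding.inr)) 1

open MvPolynomial in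
theorem Submodule.mem_of_forall_sum_prod_pow_smul_mem {K V σ : Type*} [Field K] [Infinite K]
    [AddCommGroup V] [Module K V] (W : Submodule K V) (S : Finset (σ →₀ ℕ)) (v : (σ →₀ ℕ) → V)
    (h : ∀ t : σ → K, ∑ β ∈ S, (β.prod fun i k => t i ^ k) • v β ∈ W) :
    ∀ α ∈ S, v α ∈ W := by
  classical
  intro α hα
  rw [← W.ker_mkQ, LinearMap.mem_ker, ← Module.forall_dual_apply_eq_zero_iff K]
  intro φ
  -- `φ` turns the hypothesis into the vanishing of `∑ φ (v β) u^β` at every point of `K^σ`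
  let p : MvPolynomial σ K := ∑ β ∈ S, monomial β (φ (W.mkQ (v β)))
  have hp : p = 0 := MvPolynomial.funext fun t => by
    have hφ : φ (W.mkQ (∑ β ∈ S, (β.prod fun i k => t i ^ k) • v β)) = 0 := by
      rw [W.mkQ_apply, (Submodule.Quotient.mk_eq_zero W).2 (h t), map_zero]
    simpa [p, eval_monomial, mul_comm] using hφ
  simpa [p, coeff_sum, coeff_monomial, hα] using congrArg (coeff α) hp

theorem Finset.sum_range_succ_eq_add_sum_Icc {M : Type*} [AddCommMonoid M] (f : ℕ → M) (m : ℕ) :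
    ∑ j ∈ range (m + 1), f j = f 0 + ∑ j ∈ Icc 1 m, f j := by
  rw [Nat.range_succ_eq_Icc_zero, Icc_eq_cons_Ioc (Nat.zero_le m), sum_cons,
    ← Icc_add_one_left_eq_Ioc, zero_add]

section ReesAlgebra

open Polynomial

variable {R : Type*} [CommRing R] {I : Ideal R} {g : R}

theorem IsIntegralOverIdeal.monomial_one_mem_integralClosure (h : IsIntegralOverIdeal I g) :
    monomial 1 g ∈ integralClosure (reesAlgebra I) R[X] := by
  obtain ⟨m, hm, a, ha, heq⟩ := h
  let b (j : Finset.Icc 1 m) : reesAlgebra I :=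
    ⟨monomial j (a j), reesAlgebra.monomial_mem.2 <| by
      obtain ⟨h1, h2⟩ := Finset.mem_Icc.1 j.2; exact ha j h1 h2⟩
  refine ⟨X ^ m + ∑ j ∈ (Finset.Icc 1 m).attach, C (b j) * X ^ (m - j), ?_, ?_⟩
  · refine monic_X_pow_add ((degree_sum_le _ _).trans_lt ?_)
    refine (Finset.sup_lt_iff (WithBot.bot_lt_coe m)).2 fun j _ => ?_
    refine (degree_C_mul_X_pow_le _ _).trans_lt ?_
    have := Finset.mem_Icc.1 j.2
    exact WithBot.coe_lt_coe.2 (by rw [Nat.cast_id]; omega)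
  · have hterm (j : ℕ) (hj : j ∈ Finset.Icc 1 m) :
        monomial j (a j) * monomial 1 g ^ (m - j) = monomial m (a j * g ^ (m - j)) := by
      rw [monomial_pow, monomial_mul_monomial, one_mul, Nat.add_sub_cancel' (Finset.mem_Icc.1 hj).2]
    have hsum : ∑ j ∈ (Finset.Icc 1 m).attach, aeval (monomial 1 g) (C (b j) * X ^ (m - j)) =
        ∑ j ∈ Finset.Icc 1 m, monomial m (a j * g ^ (m - j)) := by
      simp only [map_mul, map_pow, aeval_X, aeval_C]
      exact (Finset.sum_attach _ fun j => monomial j (a j) * monomial 1 g ^ (m - j)).trans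
        (Finset.sum_congr rfl hterm)
    rw [← aeval_def, map_add, map_sum, hsum, map_pow, aeval_X, monomial_pow, one_mul, ← map_sum,
      ← map_add, heq, map_zero]

theorem IsIntegralOverIdeal.of_monomial_one_mem_integralClosure [Nontrivial R]
    (h : monomial 1 g ∈ integralClosure (reesAlgebra I) R[X]) : IsIntegralOverIdeal I g := by
  obtain ⟨p, hp, hev⟩ := h
  set m := p.natDegree
  have hm : 0 < m := by
    refine Nat.pos_of_ne_zero fun h0 => one_ne_zero (α := R[X]) ?_
    rwa [hp.natDegree_eq_zero.1 h0, eval₂_one] at hev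
  -- the coefficient of `X ^ m` in `p (g X) = 0`
  have hcoeff : ∑ i ∈ Finset.range (m + 1), (p.coeff i : R[X]).coeff (m - i) * g ^ i = 0 := by
    have := congrArg (coeff · m) ((aeval_eq_sum_range (monomial 1 g)).symm.trans hev)
    simp only [finsetSum_coeff, coeff_zero, monomial_pow, one_mul] at this
    rw [← this]
    refine Finset.sum_congr rfl fun i hi => ?_
    rw [Subalgebra.smul_def, ← coeff_mul_monomial,
      Nat.sub_add_cancel (Finset.mem_range_succ_iff.1 hi), smul_eq_mul]
  let a (j : ℕ) : R := (p.coeff (m - j) : R[X]).coeff j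
  refine ⟨m, hm, a, fun j _ _ => (p.coeff (m - j)).2 j, ?_⟩
  rw [← Finset.sum_range_reflect, Finset.sum_congr rfl (g := fun j => a j * g ^ (m - j)) ?_,
    Finset.sum_range_succ_eq_add_sum_Icc] at hcoeff
  · have hlead : p.coeff m = 1 := hp.coeff_natDegree
    simpa [a, hlead] using hcoeff
  · intro j hj
    rw [Finset.mem_range] at hj
    simp only [a, show m + 1 - 1 - j = m - j by omega, show m - (m - j) = j by omega]

noncomputable def Ideal.integralClosure (I : Ideal R) : Ideal R :=
  ((_root_.integralClosure (reesAlgebra I) R[X]).restrictScalars R).toSubmodule.comap (monomial 1)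

theorem Ideal.mem_integralClosure_iff [Nontrivial R] :
    g ∈ I.integralClosure ↔ IsIntegralOverIdeal I g :=
  ⟨IsIntegralOverIdeal.of_monomial_one_mem_integralClosure,
    IsIntegralOverIdeal.monomial_one_mem_integralClosure⟩

theorem IsIntegralOverIdeal.map {S F : Type*} [CommRing S] [FunLike F R S] [RingHomClass F R S]
    (φ : F) {J : Ideal S} (hIJ : I.map φ ≤ J) (h : IsIntegralOverIdeal I g) :
    IsIntegralOverIdeal J (φ g) := by
  obtain ⟨m, hm, a, ha, heq⟩ := h
  refine ⟨m, hm, fun j => φ (a j), fun j h1 h2 => ?_, ?_⟩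
  · exact Ideal.pow_right_mono hIJ j (Ideal.map_pow φ I j ▸ Ideal.mem_map_of_mem φ (ha j h1 h2))
  · simpa using congrArg φ heq

end ReesAlgebra

namespace MvPowerSeries

variable {σ τ R : Type*} [CommRing R]

theorem aeval_X_comp_monomial (e : σ → τ) (β : σ →₀ ℕ) (c : R) :
    MvPolynomial.aeval (fun i => (X (e i) : MvPowerSeries τ R)) (MvPolynomial.monomial β c) =
      monomial (β.mapDomain e) c := by
  rw [MvPolynomial.aeval_monomial, ← monomial_mapDomain_apply_one, algebraMap_apply,
    Algebra.algebraMap_self_apply, ← monomial_zero_eq_C, monomial_mul_monomial, zero_add, mul_one]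

theorem rescale_monomial_embDomain (e : σ ↪ τ) (a : τ → R) (β : σ →₀ ℕ) (c : R) :
    rescale a (monomial (β.embDomain e) c) =
      (β.prod fun i k => a (e i) ^ k) • monomial (β.embDomain e) c := by
  classical
  ext n
  rw [coeff_rescale, map_smul, coeff_monomial, smul_eq_mul]
  split_ifs with h
  · rw [h, Finsupp.prod_embDomain]
  · rw [mul_zero, mul_zero]

end MvPowerSeries

open MvPowerSeries in
theorem rescaleAlgHom_sumElim_binomial {d : ℕ} (t : Fin d → ℂ) (β : Fin d →₀ ℕ) :
    rescaleAlgHom (Sum.elim t t) (Xmon d β - Ymon d β) =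
      (β.prod fun i k => t i ^ k) • (Xmon d β - Ymon d β) := by
  rw [map_sub, rescaleAlgHom_apply, rescaleAlgHom_apply, Xmon, Ymon, rescale_monomial_embDomain,
    rescale_monomial_embDomain, smul_sub]
  rfl

open MvPowerSeries in
theorem map_rescaleAlgHom_sumElim_span_binomial_le {d n : ℕ} (a : Fin n → Fin d →₀ ℕ)
    (t : Fin d → ℂ) :
    (Ideal.span (Set.range fun i => Xmon d (a i) - Ymon d (a i))).map
        (rescaleAlgHom (Sum.elim t t)) ≤
      Ideal.span (Set.range fun i => Xmon d (a i) - Ymon d (a i)) := by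
  rw [Ideal.map_span, Ideal.span_le]
  rintro _ ⟨_, ⟨i, rfl⟩, rfl⟩
  rw [rescaleAlgHom_sumElim_binomial]
  exact Submodule.smul_of_tower_mem _ _ (Ideal.subset_span ⟨i, rfl⟩)

theorem aeval_X_inl_sub_aeval_X_inr {d : ℕ} (f : MvPolynomial (Fin d) ℂ) :
    MvPolynomial.aeval (fun i => MvPowerSeries.X (Sum.inl i)) f -
        MvPolynomial.aeval (fun i => MvPowerSeries.X (Sum.inr i)) f =
      ∑ β ∈ f.support, MvPolynomial.coeff β f • (Xmon d β - Ymon d β) := by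
  conv_lhs => rw [f.as_sum]
  rw [map_sum, map_sum, ← Finset.sum_sub_distrib]
  refine Finset.sum_congr rfl fun β _ => ?_
  rw [MvPowerSeries.aeval_X_comp_monomial, MvPowerSeries.aeval_X_comp_monomial, Xmon, Ymon,
    Finsupp.embDomain_eq_mapDomain, Finsupp.embDomain_eq_mapDomain, smul_sub, ← map_smul,
    ← map_smul, smul_eq_mul, mul_one]
  rfl

theorem monomials_of_homogeneous_saturated_general (d n : ℕ)
    (a : Fin n → (Fin d →₀ ℕ))
    (IΔ : Ideal (MvPowerSeries (Fin d ⊕ Fin d) ℂ))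
    (hIΔ : IΔ = Ideal.span (Set.range fun i => Xmon d (a i) - Ymon d (a i)))
    (f : MvPolynomial (Fin d) ℂ)
    (hint : IsIntegralOverIdeal IΔ
      ((MvPolynomial.aeval fun i => MvPowerSeries.X (Sum.inl i)) f -
       (MvPolynomial.aeval fun i => MvPowerSeries.X (Sum.inr i)) f)) :
    ∀ α : Fin d →₀ ℕ, MvPolynomial.coeff α f ≠ 0 →
      IsIntegralOverIdeal IΔ (Xmon d α - Ymon d α) := by
  intro α hα
  rw [aeval_X_inl_sub_aeval_X_inr] at hint
  have hstable (t : Fin d → ℂ) : IΔ.map (MvPowerSeries.rescaleAlgHom (Sum.elim t t)) ≤ IΔ := by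
    subst hIΔ
    exact map_rescaleAlgHom_sumElim_span_binomial_le a t
  have hrescaled (t : Fin d → ℂ) : ∑ β ∈ f.support, (β.prod fun i k => t i ^ k) •
      MvPolynomial.coeff β f • (Xmon d β - Ymon d β) ∈ IΔ.integralClosure.restrictScalars ℂ := by
    rw [Submodule.restrictScalars_mem, Ideal.mem_integralClosure_iff]
    convert hint.map _ (hstable t) using 1
    rw [map_sum]
    refine Finset.sum_congr rfl fun β _ => ?_
    rw [map_smul, rescaleAlgHom_sumElim_binomial, smul_comm]
  have hterm := Submodule.mem_of_forall_sum_prod_pow_smul_mem _ _ _ hrescaled α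
    (MvPolynomial.mem_support_iff.2 hα)
  rwa [Submodule.smul_mem_iff _ hα, Submodule.restrictScalars_mem,
    Ideal.mem_integralClosure_iff] at hterm

/-- If `f` is a homogeneous polynomial in `u_1,…,u_d` such that `f(x) - f(y)` is integral over
the binomial ideal `I_Δ = ⟨x^{a_i} - y^{a_i} : 1 ≤ i ≤ n⟩` of `ℂ[[x_1,…,x_d,y_1,…,y_d]]`,
then `x^α - y^α` is integral over `I_Δ` for every monomial `u^α` appearing in `f` with a
nonzero coefficient.  Here `f(x)` and `f(y)` are obtained from `f` via the ℂ-algebra maps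
induced by `u_i ↦ x_i` and `u_i ↦ y_i` respectively. -/
theorem monomials_of_homogeneous_saturated (d n : ℕ) (hd : 1 ≤ d) (hn : 1 ≤ n)
    (a : Fin n → (Fin d →₀ ℕ)) (ha : ∀ i, a i ≠ 0)
    (IΔ : Ideal (MvPowerSeries (Fin d ⊕ Fin d) ℂ))
    (hIΔ : IΔ = Ideal.span (Set.range fun i => Xmon d (a i) - Ymon d (a i)))
    (k : ℕ) (f : MvPolynomial (Fin d) ℂ) (hf : f.IsHomogeneous k)
    (hint : IsIntegralOverIdeal IΔ
      ((MvPolynomial.aeval fun i => MvPowerSeries.X (Sum.inl i)) f -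
       (MvPolynomial.aeval fun i => MvPowerSeries.X (Sum.inr i)) f)) :
    ∀ α : Fin d →₀ ℕ, MvPolynomial.coeff α f ≠ 0 →
      IsIntegralOverIdeal IΔ (Xmon d α - Ymon d α) :=
  monomials_of_homogeneous_saturated_general d n a IΔ hIΔ f hint
end

section
/- Let α ≥ 1, β ≥ 1 and N ≥ 2 be integers with gcd(β, N) = 1, and let T^s = { m·min(N,β) : m ∈ ℕ } ∪ { n ∈ ℕ : n ≥ max(N,β) }. Then the set Γ^s = { (a,b) ∈ ℕ² : N divides b, or (a ≥ α and b ∈ T^s) } is an additive submonoid of ℕ² containing (1,0), (α,β) and (0,N). -/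
/-!
`T^s = min(N,β)·ℕ ∪ [max(N,β), ∞)` is closed under addition (a sum with a summand `≥ max(N,β)` is
again `≥ max(N,β)`) and contains `N`, hence every multiple of `N`. So the second coordinates of
the two kinds of elements of `Γ^s` can always be added inside `T^s`, while the condition `α ≤ a`
persists under addition.
-/

def multiplesUnionIci (d c : ℕ) : AddSubmonoid ℕ where
  carrier := {n | ∃ m : ℕ, n = m * d} ∪ {n | c ≤ n}
  zero_mem' := Or.inl ⟨0, (zero_mul d).symm⟩
  add_mem' := by
    rintro s t (⟨m, rfl⟩ | hs) (⟨k, rfl⟩ | ht)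
    · exact Or.inl ⟨m + k, (add_mul m k d).symm⟩
    · exact Or.inr (show c ≤ _ from le_add_left ht)
    · exact Or.inr (show c ≤ _ from le_add_right hs)
    · exact Or.inr (show c ≤ _ from le_add_right hs)

theorem left_mem_multiplesUnionIci_min_max (x y : ℕ) :
    x ∈ multiplesUnionIci (min x y) (max x y) := by
  rcases le_total x y with h | h
  · exact Or.inl ⟨1, by rw [min_eq_left h, one_mul]⟩
  · exact Or.inr (max_eq_left h).le

theorem right_mem_multiplesUnionIci_min_max (x y : ℕ) :
    y ∈ multiplesUnionIci (min x y) (max x y) := by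
  rw [min_comm, max_comm]
  exact left_mem_multiplesUnionIci_min_max y x

theorem AddSubmonoid.mem_of_dvd {S : AddSubmonoid ℕ} {N n : ℕ} (hN : N ∈ S) (h : N ∣ n) :
    n ∈ S := by
  obtain ⟨k, rfl⟩ := h
  simpa only [smul_eq_mul, mul_comm] using S.nsmul_mem hN k

def dvdOrLeMem (N α : ℕ) (S : AddSubmonoid ℕ) (hN : N ∈ S) : AddSubmonoid (ℕ × ℕ) where
  carrier := {p | N ∣ p.2 ∨ (α ≤ p.1 ∧ p.2 ∈ S)}
  zero_mem' := Or.inl (dvd_zero N)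
  add_mem' := by
    rintro p q (hp | ⟨hp₁, hp₂⟩) (hq | ⟨hq₁, hq₂⟩)
    · exact Or.inl (dvd_add hp hq)
    · exact Or.inr ⟨le_add_left hq₁, S.add_mem (S.mem_of_dvd hN hp) hq₂⟩
    · exact Or.inr ⟨le_add_right hp₁, S.add_mem hp₂ (S.mem_of_dvd hN hq)⟩
    · exact Or.inr ⟨le_add_right hp₁, S.add_mem hp₂ hq₂⟩

theorem saturation_semigroup_hypersurface_general (α β N : ℕ)
    (Ts : Set ℕ)
    (hTs : Ts = {n | ∃ m : ℕ, n = m * min N β} ∪ {n | max N β ≤ n}) :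
    ∃ M : AddSubmonoid (ℕ × ℕ),
      (↑M = {p : ℕ × ℕ | N ∣ p.2 ∨ (α ≤ p.1 ∧ p.2 ∈ Ts)}) ∧
      (1, 0) ∈ M ∧ (α, β) ∈ M ∧ (0, N) ∈ M := by
  subst hTs
  refine ⟨dvdOrLeMem N α (multiplesUnionIci (min N β) (max N β))
    (left_mem_multiplesUnionIci_min_max N β), rfl, ?_, ?_, ?_⟩
  · exact Or.inl (dvd_zero N)
  · exact Or.inr ⟨le_rfl, right_mem_multiplesUnionIci_min_max N β⟩
  · exact Or.inl dvd_rfl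

/-- Let `α, β ≥ 1`, `N ≥ 2`, `gcd(β, N) = 1`, and let `T^s = min(N,β)·ℕ ∪ [max(N,β), ∞)` be
the saturation of the numerical semigroup generated by `N` and `β`.  Then
`Γ^s = { (a,b) ∈ ℕ² : N ∣ b, or (a ≥ α and b ∈ T^s) }` is an additive submonoid of `ℕ²`
containing `(1,0)`, `(α,β)` and `(0,N)`. -/
theorem saturation_semigroup_hypersurface (α β N : ℕ)
    (hα : 1 ≤ α) (hβ : 1 ≤ β) (hN : 2 ≤ N) (hgcd : Nat.gcd β N = 1)
    (Ts : Set ℕ)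
    (hTs : Ts = {n | ∃ m : ℕ, n = m * min N β} ∪ {n | max N β ≤ n}) :
    ∃ M : AddSubmonoid (ℕ × ℕ),
      (↑M = {p : ℕ × ℕ | N ∣ p.2 ∨ (α ≤ p.1 ∧ p.2 ∈ Ts)}) ∧
      (1, 0) ∈ M ∧ (α, β) ∈ M ∧ (0, N) ∈ M :=
  saturation_semigroup_hypersurface_general α β N Ts hTs
end

section
/- Let α ≥ 1 and 2 ≤ N < β be integers with gcd(β, N) = 1, let T^s = { mN : m ∈ ℕ } ∪ { n ∈ ℕ : n ≥ β }, and let Γ^s = { (a,b) ∈ ℕ² : N divides b, or (a ≥ α and b ∈ T^s) }. Set A = {(1,0), (α,β), (0,N)} and B = { (α, β+i) : 1 ≤ i ≤ N−1 and N does not divide β+i }. Then: (1) Γ^s is the additive submonoid of ℕ² generated by A ∪ B; (2) for every g ∈ A ∪ B, g does not belong to the additive submonoid generated by (A ∪ B) \ {g}; (3) A ∪ B has exactly N+1 elements. -/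
/-!
`Γ^s` is the set of `(a, b)` with `N ∣ b`, or `a ≥ α` and `b ≥ β`. Modulo the moves `(1, 0)`
and `(0, N)`, every element lies above some `(α, β + i)` with `0 ≤ i < N` and `N ∤ β + i`;
since `N ∤ β`, the shift `i = 0` is `(α, β)` itself. None of these `N + 1` generators is a
generator plus a nonzero element of `Γ^s`: the only possible differences have second
coordinate a nonzero residue below `N ≤ β`, which is neither divisible by `N` nor `≥ β`.
-/

open Finset

theorem AddSubmonoid.notMem_closure_of_forall_eq_add {M : Type*} [AddMonoid M] {S : Set M}
    {P : AddSubmonoid M} (hSP : S ⊆ P) {g : M} (hg₀ : g ≠ 0) (hgS : g ∉ S)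
    (hdecomp : ∀ s ∈ S, ∀ t ∈ P, g = s + t → t = 0) : g ∉ AddSubmonoid.closure S := by
  intro hg
  induction hg using AddSubmonoid.closure_induction_left with
  | zero => exact hg₀ rfl
  | add_left s hs t ht _ =>
    have ht₀ := hdecomp s hs t (AddSubmonoid.closure_le.mpr hSP ht) rfl
    exact hgS (by rwa [ht₀, add_zero])

theorem Nat.card_filter_range_dvd_add {N : ℕ} (hN : 0 < N) (b : ℕ) :
    #{i ∈ range N | N ∣ b + i} = 1 := by
  have hr : b % N < N := Nat.mod_lt b hN
  have hdvd_iff : ∀ i < N, N ∣ b + i ↔ b % N + i = 0 ∨ b % N + i = N := by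
    intro i hi
    rw [((Nat.mod_modEq b N).symm.add_right i).dvd_iff dvd_rfl]
    constructor
    · rintro ⟨k, hk⟩
      have : k < 2 := Nat.lt_of_mul_lt_mul_left (a := N) (by omega)
      interval_cases k <;> simp_all
    · rintro (h | h) <;> simp [h]
  rw [card_eq_one]
  refine ⟨if b % N = 0 then 0 else N - b % N, ?_⟩
  ext i
  simp only [mem_filter, mem_range, mem_singleton]
  constructor
  · rintro ⟨hi, hdvd⟩
    rw [hdvd_iff i hi] at hdvd
    split_ifs <;> omega
  · intro h
    have hi : i < N := by split_ifs at h <;> omega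
    exact ⟨hi, (hdvd_iff i hi).mpr (by split_ifs at h <;> omega)⟩

namespace LipschitzSaturation

def saturatedMonoid (α β N : ℕ) : AddSubmonoid (ℕ × ℕ) where
  carrier := {p | N ∣ p.2 ∨ (α ≤ p.1 ∧ β ≤ p.2)}
  zero_mem' := Or.inl (dvd_zero N)
  add_mem' := by
    rintro ⟨a, b⟩ ⟨c, d⟩ (h₁ | ⟨ha, hb⟩) (h₂ | ⟨hc, hd⟩)
    · exact Or.inl (dvd_add h₁ h₂)
    all_goals exact Or.inr ⟨by simp only [Prod.fst_add]; omega, by simp only [Prod.snd_add]; omega⟩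

theorem mem_saturatedMonoid {α β N : ℕ} {p : ℕ × ℕ} :
    p ∈ saturatedMonoid α β N ↔ N ∣ p.2 ∨ (α ≤ p.1 ∧ β ≤ p.2) :=
  Iff.rfl

theorem coe_saturatedMonoid (α β N : ℕ) :
    (saturatedMonoid α β N : Set (ℕ × ℕ)) =
      {p | N ∣ p.2 ∨ (α ≤ p.1 ∧ p.2 ∈ {n | ∃ m : ℕ, n = m * N} ∪ {n | β ≤ n})} := by
  ext ⟨a, b⟩
  simp only [SetLike.mem_coe, mem_saturatedMonoid, Set.mem_ofPred_eq, Set.mem_union]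
  constructor
  · rintro (h | ⟨ha, hb⟩)
    exacts [Or.inl h, Or.inr ⟨ha, Or.inr hb⟩]
  · rintro (h | ⟨ha, ⟨m, rfl⟩ | hb⟩)
    exacts [Or.inl h, Or.inl (dvd_mul_left N m), Or.inr ⟨ha, hb⟩]

/-- `(α, β + i)` is the least element of `Γ^s` over `(α, ·)` in the residue class of `β + i`. -/
def saturatedGenerators (α β N : ℕ) : Set (ℕ × ℕ) :=
  insert (1, 0) (insert (0, N) ((fun i => (α, β + i)) '' {i | i < N ∧ ¬ N ∣ β + i}))

theorem mem_saturatedGenerators {α β N : ℕ} {p : ℕ × ℕ} :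
    p ∈ saturatedGenerators α β N ↔
      p = (1, 0) ∨ p = (0, N) ∨ ∃ i < N, ¬ N ∣ β + i ∧ p = (α, β + i) := by
  simp only [saturatedGenerators, Set.mem_insert_iff, Set.mem_image, Set.mem_ofPred_eq]
  refine or_congr_right (or_congr_right ⟨?_, ?_⟩)
  · rintro ⟨i, ⟨hi, hdvd⟩, rfl⟩
    exact ⟨i, hi, hdvd, rfl⟩
  · rintro ⟨i, hi, hdvd, rfl⟩
    exact ⟨i, ⟨hi, hdvd⟩, rfl⟩

theorem saturatedGenerators_subset (α β N : ℕ) :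
    saturatedGenerators α β N ⊆ saturatedMonoid α β N := by
  intro p hp
  rcases mem_saturatedGenerators.mp hp with rfl | rfl | ⟨i, -, -, rfl⟩
  · exact Or.inl (dvd_zero N)
  · exact Or.inl dvd_rfl
  · exact Or.inr ⟨le_rfl, Nat.le_add_right β i⟩

theorem saturatedMonoid_le_closure {α β N : ℕ} (hN : 0 < N) :
    saturatedMonoid α β N ≤ AddSubmonoid.closure (saturatedGenerators α β N) := by
  have mem_closure {p} (hp : p ∈ saturatedGenerators α β N) :=
    AddSubmonoid.subset_closure (s := saturatedGenerators α β N) hp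
  have h10 := mem_closure (mem_saturatedGenerators.mpr (Or.inl rfl))
  have h0N := mem_closure (mem_saturatedGenerators.mpr (Or.inr (Or.inl rfl)))
  rintro ⟨a, b⟩ hp
  by_cases hb : N ∣ b
  · obtain ⟨k, rfl⟩ := hb
    have hdecomp : (a, N * k) = a • ((1, 0) : ℕ × ℕ) + k • (0, N) := by
      simp [mul_comm]
    rw [hdecomp]
    exact add_mem (nsmul_mem h10 a) (nsmul_mem h0N k)
  obtain ⟨ha, hβb⟩ := mem_saturatedMonoid.mp hp |>.resolve_left hb
  obtain ⟨i, k, hi, hb'⟩ : ∃ i k, i < N ∧ b = β + i + N * k :=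
    ⟨(b - β) % N, (b - β) / N, Nat.mod_lt _ hN, by have := Nat.mod_add_div (b - β) N; omega⟩
  have hshift : (α, β + i) ∈ saturatedGenerators α β N := by
    refine mem_saturatedGenerators.mpr (Or.inr (Or.inr ⟨i, hi, fun h => hb ?_, rfl⟩))
    exact hb' ▸ dvd_add h (dvd_mul_right N k)
  have hdecomp : (a, b) = (a - α) • ((1, 0) : ℕ × ℕ) + (α, β + i) + k • (0, N) := by
    simp only [Prod.smul_mk, smul_eq_mul, mul_one, mul_zero, Prod.mk_add_mk, add_zero,
      zero_add, Prod.mk.injEq]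
    constructor <;> [omega; (rw [mul_comm k N]; omega)]
  rw [hdecomp]
  exact add_mem (add_mem (nsmul_mem h10 _) (mem_closure hshift)) (nsmul_mem h0N k)

theorem closure_saturatedGenerators {α β N : ℕ} (hN : 0 < N) :
    AddSubmonoid.closure (saturatedGenerators α β N) = saturatedMonoid α β N :=
  le_antisymm (AddSubmonoid.closure_le.mpr (saturatedGenerators_subset α β N))
    (saturatedMonoid_le_closure hN)

theorem eq_zero_of_eq_add_of_mem_saturatedGenerators {α β N : ℕ} (hN : 0 < N) (hNβ : N ≤ β)
    {g s t : ℕ × ℕ} (hg : g ∈ saturatedGenerators α β N) (hs : s ∈ saturatedGenerators α β N)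
    (ht : t ∈ saturatedMonoid α β N) (hgst : g = s + t) : t = 0 := by
  obtain ⟨t₁, t₂⟩ := t
  rcases mem_saturatedGenerators.mp hg with rfl | rfl | ⟨i, hi, hdi, rfl⟩ <;>
    rcases mem_saturatedGenerators.mp hs with rfl | rfl | ⟨j, hj, hdj, rfl⟩ <;>
    simp only [Prod.mk_add_mk, Prod.mk.injEq, Prod.mk_eq_zero] at hgst ⊢ <;>
    rcases (ht : N ∣ t₂ ∨ (α ≤ t₁ ∧ β ≤ t₂)) with hdvd | ⟨h₁, h₂⟩ <;>
    try omega
  · exact hdi (by rw [hgst.2, zero_add]; exact hdvd) |>.elim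
  · exact hdi (by rw [hgst.2]; exact dvd_add dvd_rfl hdvd) |>.elim
  · have : t₂ = 0 := Nat.eq_zero_of_dvd_of_lt hdvd (by omega)
    omega

theorem zero_notMem_saturatedGenerators {α β N : ℕ} (hN : 0 < N) :
    (0 : ℕ × ℕ) ∉ saturatedGenerators α β N := by
  intro h
  rcases mem_saturatedGenerators.mp h with h | h | ⟨i, -, hdvd, h⟩ <;>
    simp only [Prod.ext_iff, Prod.fst_zero, Prod.snd_zero] at h
  · omega
  · omega
  · exact hdvd (h.2 ▸ dvd_zero N)

theorem notMem_closure_diff_saturatedGenerators {α β N : ℕ} (hN : 0 < N) (hNβ : N ≤ β)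
    {g : ℕ × ℕ} (hg : g ∈ saturatedGenerators α β N) :
    g ∉ AddSubmonoid.closure (saturatedGenerators α β N \ {g}) := by
  refine AddSubmonoid.notMem_closure_of_forall_eq_add
    (Set.sdiff_subset.trans (saturatedGenerators_subset α β N))
    (fun h => zero_notMem_saturatedGenerators hN (h ▸ hg)) (fun h => h.2 rfl) ?_
  rintro s ⟨hs, -⟩ t ht hgst
  exact eq_zero_of_eq_add_of_mem_saturatedGenerators hN hNβ hg hs ht hgst

theorem ncard_saturatedGenerators {α β N : ℕ} (hN : 0 < N) :
    (saturatedGenerators α β N).ncard = N + 1 := by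
  have hshifts : {i | i < N ∧ ¬ N ∣ β + i} = ↑({i ∈ range N | ¬ N ∣ β + i} : Finset ℕ) := by
    ext i
    simp
  have hcard : #{i ∈ range N | ¬ N ∣ β + i} = N - 1 := by
    have := card_filter_add_card_filter_not (s := range N) (fun i => N ∣ β + i)
    rw [Nat.card_filter_range_dvd_add hN, card_range] at this
    omega
  have hinj : Function.Injective fun i => ((α, β + i) : ℕ × ℕ) := by
    intro i j h
    simpa using h
  rw [saturatedGenerators, hshifts, Set.ncard_insert_of_notMem, Set.ncard_insert_of_notMem,
    Set.ncard_image_of_injective _ hinj, Set.ncard_coe_finset, hcard]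
  · omega
  · rintro ⟨i, hi, h⟩
    simp only [coe_filter, Set.mem_ofPred_eq, Prod.mk.injEq] at hi h
    exact hi.2 (h.2 ▸ dvd_rfl)
  · rintro (h | ⟨i, hi, h⟩)
    · simp at h
    · simp only [coe_filter, Set.mem_ofPred_eq, Prod.mk.injEq] at hi h
      exact hi.2 (h.2 ▸ dvd_zero N)

theorem union_eq_saturatedGenerators {α β N : ℕ} (hN : 0 < N) (hβ : ¬ N ∣ β) :
    ({(1, 0), (α, β), (0, N)} : Set (ℕ × ℕ)) ∪
        {p | ∃ i : ℕ, 1 ≤ i ∧ i ≤ N - 1 ∧ ¬ N ∣ (β + i) ∧ p = (α, β + i)} =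
      saturatedGenerators α β N := by
  ext p
  rw [mem_saturatedGenerators]
  simp only [Set.mem_union, Set.mem_insert_iff, Set.mem_singleton_iff, Set.mem_ofPred_eq]
  constructor
  · rintro ((rfl | rfl | rfl) | ⟨i, hi₁, hi, hdvd, rfl⟩)
    · exact Or.inl rfl
    · exact Or.inr (Or.inr ⟨0, hN, by simpa using hβ, by simp⟩)
    · exact Or.inr (Or.inl rfl)
    · exact Or.inr (Or.inr ⟨i, by omega, hdvd, rfl⟩)
  · rintro (rfl | rfl | ⟨i, hi, hdvd, rfl⟩)
    · simp
    · simp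
    · rcases Nat.eq_zero_or_pos i with rfl | hi₀
      · simp
      · exact Or.inr ⟨i, hi₀, by omega, hdvd, rfl⟩

end LipschitzSaturation

open LipschitzSaturation

theorem minimal_generators_case_N_lt_beta_general (α β N : ℕ)
    (hN : 2 ≤ N) (hNβ : N < β) (hgcd : Nat.gcd β N = 1)
    (Ts : Set ℕ) (hTs : Ts = {n | ∃ m : ℕ, n = m * N} ∪ {n | β ≤ n})
    (Γs : Set (ℕ × ℕ)) (hΓs : Γs = {p : ℕ × ℕ | N ∣ p.2 ∨ (α ≤ p.1 ∧ p.2 ∈ Ts)})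
    (A B : Set (ℕ × ℕ))
    (hA : A = {(1, 0), (α, β), (0, N)})
    (hB : B = {p : ℕ × ℕ | ∃ i : ℕ, 1 ≤ i ∧ i ≤ N - 1 ∧ ¬ N ∣ (β + i) ∧ p = (α, β + i)}) :
    (↑(AddSubmonoid.closure (A ∪ B)) = Γs) ∧
    (∀ g ∈ A ∪ B, g ∉ AddSubmonoid.closure ((A ∪ B) \ {g})) ∧
    (A ∪ B).ncard = N + 1 := by
  subst hTs hΓs hA hB
  have hβ : ¬ N ∣ β := fun h => by rw [Nat.gcd_eq_right h] at hgcd; omega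
  rw [union_eq_saturatedGenerators (by omega) hβ]
  exact ⟨by rw [closure_saturatedGenerators (by omega), coe_saturatedMonoid],
    fun g hg => notMem_closure_diff_saturatedGenerators (by omega) hNβ.le hg,
    ncard_saturatedGenerators (by omega)⟩

/-- Case `N < β` of the minimal generating set of the saturated semigroup of the toric
hypersurface `y^N - x^{αN} z^β = 0`.  With `T^s = N·ℕ ∪ [β, ∞)`,
`Γ^s = { (a,b) : N ∣ b, or (a ≥ α and b ∈ T^s) }`, `A = {(1,0), (α,β), (0,N)}` and
`B = { (α, β+i) : 1 ≤ i ≤ N-1, N ∤ β+i }`: the set `A ∪ B` generates `Γ^s`, is minimal,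
and has exactly `N + 1` elements. -/
theorem minimal_generators_case_N_lt_beta (α β N : ℕ)
    (hα : 1 ≤ α) (hN : 2 ≤ N) (hNβ : N < β) (hgcd : Nat.gcd β N = 1)
    (Ts : Set ℕ) (hTs : Ts = {n | ∃ m : ℕ, n = m * N} ∪ {n | β ≤ n})
    (Γs : Set (ℕ × ℕ)) (hΓs : Γs = {p : ℕ × ℕ | N ∣ p.2 ∨ (α ≤ p.1 ∧ p.2 ∈ Ts)})
    (A B : Set (ℕ × ℕ))
    (hA : A = {(1, 0), (α, β), (0, N)})
    (hB : B = {p : ℕ × ℕ | ∃ i : ℕ, 1 ≤ i ∧ i ≤ N - 1 ∧ ¬ N ∣ (β + i) ∧ p = (α, β + i)}) :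
    (↑(AddSubmonoid.closure (A ∪ B)) = Γs) ∧
    (∀ g ∈ A ∪ B, g ∉ AddSubmonoid.closure ((A ∪ B) \ {g})) ∧
    (A ∪ B).ncard = N + 1 :=
  minimal_generators_case_N_lt_beta_general α β N hN hNβ hgcd Ts hTs Γs hΓs A B hA hB
end

section
/- Let α ≥ 1 and 2 ≤ β < N be integers with gcd(β, N) = 1, let k = ⌊N/β⌋, let T^s = { mβ : m ∈ ℕ } ∪ { n ∈ ℕ : n ≥ N }, and let Γ^s = { (a,b) ∈ ℕ² : N divides b, or (a ≥ α and b ∈ T^s) }. Set A = {(1,0), (α,β), (0,N)} and B = { (α, iβ) : 2 ≤ i ≤ k } ∪ { (α, N+i) : 1 ≤ i ≤ N−1 and β does not divide i }. Then: (1) Γ^s is the additive submonoid of ℕ² generated by A ∪ B; (2) for every g ∈ A ∪ B, g does not belong to the additive submonoid generated by (A ∪ B) \ {g}; (3) A ∪ B has exactly N+1 elements. -/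
/-!
An element `(a, b)` of `Γ^s` with `N ∤ b` has `a ≥ α` and `b ∈ T^s`, so `b = w_r + N q` where
`w_r` is the least element of `T^s` congruent to `r = b % N`: `w_r = r` if `β ∣ r` and
`w_r = N + r` otherwise. Hence `(a, b) = (a - α, N q) + (α, w_r)`, and `Γ^s` is generated by
`(1, 0)`, `(0, N)` and the `N - 1` elements `(α, w_r)`, `0 < r < N`; since `β ∤ N`, these are
exactly `A ∪ B`. Each of them is irreducible in `Γ^s`: if `(α, w_r) = p + q`, one summand has
first coordinate `< α`, so its second coordinate is `0` or `N`, and `N` would leave `r ∉ T^s` for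
the other. In a monoid without nontrivial units an irreducible element is never a sum of other
elements of a generating set.
-/

theorem AddSubmonoid.isAddUnit_iff_coe_eq_zero {M : Type*} [AddMonoid M]
    [Subsingleton (AddUnits M)] {S : AddSubmonoid M} {a : S} : IsAddUnit a ↔ (a : M) = 0 := by
  refine ⟨fun h => isAddUnit_iff_eq_zero.1 (h.map S.subtype), fun h => ?_⟩
  rw [show a = 0 from Subtype.ext h]
  exact isAddUnit_zero

theorem AddSubmonoid.addIrreducible_iff {M : Type*} [AddMonoid M] [Subsingleton (AddUnits M)]
    {S : AddSubmonoid M} {g : S} :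
    AddIrreducible g ↔
      (g : M) ≠ 0 ∧ ∀ p ∈ S, ∀ q ∈ S, p + q = g → p = 0 ∨ q = 0 := by
  simp only [_root_.addIrreducible_iff, isAddUnit_iff_coe_eq_zero, Subtype.forall, Subtype.ext_iff,
    AddSubmonoid.coe_add, eq_comm (a := (g : M))]
  exact and_congr_left' ne_comm

theorem AddIrreducible.coe_notMem_closure_diff_singleton {M : Type*} [AddMonoid M]
    [Subsingleton (AddUnits M)] {S : AddSubmonoid M} {G : Set M} (hG : G ⊆ S) {g : S}
    (hg : AddIrreducible g) : (g : M) ∉ AddSubmonoid.closure (G \ {(g : M)}) := by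
  obtain ⟨hg0, hg⟩ := AddSubmonoid.addIrreducible_iff.1 hg
  suffices h : ∀ x ∈ AddSubmonoid.closure (G \ {(g : M)}), x ∈ S ∧ x ≠ g from
    fun hmem => (h _ hmem).2 rfl
  intro x hx
  induction hx using AddSubmonoid.closure_induction with
  | mem x hx => exact ⟨hG hx.1, hx.2⟩
  | zero => exact ⟨S.zero_mem, Ne.symm hg0⟩
  | add x y _ _ hx hy =>
    refine ⟨S.add_mem hx.1 hy.1, fun hxy => ?_⟩
    rcases hg x hx.1 y hy.1 hxy with rfl | rfl
    · exact hy.2 (by simpa using hxy)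
    · exact hx.2 (by simpa using hxy)

theorem dvd_or_le_add_of_dvd {β N b b' : ℕ} (h : N ∣ b) (h' : β ∣ b' ∨ N ≤ b') :
    β ∣ b + b' ∨ N ≤ b + b' := by
  obtain ⟨_ | d, rfl⟩ := h
  · simpa using h'
  · exact Or.inr (le_add_right (Nat.le_mul_of_pos_right N d.succ_pos))

theorem eq_zero_or_eq_of_dvd_of_lt_two_mul {N b : ℕ} (h : N ∣ b) (hb : b < 2 * N) :
    b = 0 ∨ b = N := by
  obtain ⟨_ | _ | d, rfl⟩ := h
  · exact Or.inl rfl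
  · exact Or.inr (mul_one N)
  · nlinarith

-- `Γ^s`; here `β ∣ b ∨ N ≤ b` says `b ∈ T^s`.
def saturationMonoid (α β N : ℕ) : AddSubmonoid (ℕ × ℕ) where
  carrier := {p | N ∣ p.2 ∨ (α ≤ p.1 ∧ (β ∣ p.2 ∨ N ≤ p.2))}
  zero_mem' := Or.inl (dvd_zero N)
  add_mem' := by
    rintro ⟨a, b⟩ ⟨a', b'⟩ (hb | ⟨ha, hb⟩) (hb' | ⟨ha', hb'⟩) <;>
      simp only [Set.mem_ofPred_eq, Prod.mk_add_mk]
    · exact Or.inl (dvd_add hb hb')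
    · exact Or.inr ⟨le_add_left ha', dvd_or_le_add_of_dvd hb hb'⟩
    · exact Or.inr ⟨le_add_right ha, add_comm b' b ▸ dvd_or_le_add_of_dvd hb' hb⟩
    · refine Or.inr ⟨le_add_right ha, ?_⟩
      rcases hb with hb | hb
      · rcases hb' with hb' | hb'
        · exact Or.inl (dvd_add hb hb')
        · exact Or.inr (le_add_left hb')
      · exact Or.inr (le_add_right hb)

-- The least element of `T^s` congruent to `r` modulo `N`, for `0 < r < N`.
def aperyElement (β N r : ℕ) : ℕ := if β ∣ r then r else N + r

def saturationGenerators (α β N : ℕ) : Set (ℕ × ℕ) :=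
  {(1, 0), (0, N)} ∪ (fun r => (α, aperyElement β N r)) '' Set.Ioo 0 N

section

variable {α β N r : ℕ}

theorem aperyElement_mod (hr : r < N) : aperyElement β N r % N = r := by
  unfold aperyElement
  split_ifs <;> simp [Nat.mod_eq_of_lt hr]

theorem exists_eq_aperyElement_add {b : ℕ} (hb : β ∣ b ∨ N ≤ b) :
    ∃ q, b = aperyElement β N (b % N) + N * q := by
  have hdiv := Nat.mod_add_div b N
  unfold aperyElement
  split_ifs with h
  · exact ⟨b / N, hdiv.symm⟩
  · have hNb : N ≤ b := by
      by_contra hlt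
      exact h (by rw [Nat.mod_eq_of_lt (not_le.1 hlt)]; exact hb.resolve_right hlt)
    rcases N.eq_zero_or_pos with rfl | hN
    · simp
    obtain ⟨q, hq⟩ := Nat.exists_eq_add_of_lt (Nat.div_pos hNb hN)
    refine ⟨q, ?_⟩
    rw [hq, zero_add, mul_add] at hdiv
    omega

theorem mem_saturationMonoid {p : ℕ × ℕ} :
    p ∈ saturationMonoid α β N ↔ N ∣ p.2 ∨ (α ≤ p.1 ∧ (β ∣ p.2 ∨ N ≤ p.2)) :=
  Iff.rfl

theorem mk_aperyElement_mem_saturationMonoid :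
    (α, aperyElement β N r) ∈ saturationMonoid α β N := by
  unfold aperyElement
  split_ifs with h
  · exact Or.inr ⟨le_rfl, Or.inl h⟩
  · exact Or.inr ⟨le_rfl, Or.inr (le_add_right le_rfl)⟩

theorem eq_zero_of_add_eq_mk_aperyElement {p q : ℕ × ℕ} (hp : p ∈ saturationMonoid α β N)
    (hq : q ∈ saturationMonoid α β N) (hr : r ∈ Set.Ioo 0 N)
    (hpq : p + q = (α, aperyElement β N r)) (hpα : p.1 < α) : p = 0 := by
  obtain ⟨a, b⟩ := p
  obtain ⟨a', b'⟩ := q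
  obtain ⟨hr0, hrN⟩ := hr
  simp only [Prod.mk_add_mk, Prod.mk.injEq] at hpq
  obtain ⟨ha, hb⟩ := hpq
  have hNb : N ∣ b := (mem_saturationMonoid.1 hp).resolve_right fun h => hpα.not_ge h.1
  have hlt : aperyElement β N r < 2 * N := by
    unfold aperyElement
    split_ifs <;> omega
  rcases eq_zero_or_eq_of_dvd_of_lt_two_mul hNb (by omega) with rfl | rfl
  · have hNb' : ¬ N ∣ b' := by
      rw [Nat.dvd_iff_mod_eq_zero, show b' = aperyElement β N r by omega, aperyElement_mod hrN]
      exact hr0.ne'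
    have ha' : α ≤ a' := ((mem_saturationMonoid.1 hq).resolve_left hNb').1
    obtain rfl : a = 0 := by omega
    rfl
  · exfalso
    unfold aperyElement at hb
    split_ifs at hb with hβr
    · omega
    obtain rfl : b' = r := by omega
    rcases mem_saturationMonoid.1 hq with h | ⟨_, h | h⟩
    · exact (Nat.le_of_dvd hr0 h).not_gt hrN
    · exact hβr h
    · exact h.not_gt hrN

theorem addIrreducible_mk_aperyElement (hα : 1 ≤ α) (hr : r ∈ Set.Ioo 0 N) :
    AddIrreducible (⟨(α, aperyElement β N r), mk_aperyElement_mem_saturationMonoid⟩ :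
      saturationMonoid α β N) := by
  refine AddSubmonoid.addIrreducible_iff.2 ⟨by simp; omega, fun p hp q hq hpq => ?_⟩
  by_cases hpα : p.1 < α
  · exact Or.inl (eq_zero_of_add_eq_mk_aperyElement hp hq hr hpq hpα)
  · refine Or.inr (eq_zero_of_add_eq_mk_aperyElement hq hp hr (add_comm p q ▸ hpq) ?_)
    have h1 : p.1 + q.1 = α := congrArg Prod.fst hpq
    omega

theorem addIrreducible_mk_zero_N (hα : 1 ≤ α) (hN : 0 < N) :
    AddIrreducible (⟨(0, N), Or.inl (dvd_refl N)⟩ : saturationMonoid α β N) := by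
  refine AddSubmonoid.addIrreducible_iff.2
    ⟨by simpa using hN.ne', fun ⟨a, b⟩ hp ⟨a', b'⟩ hq hpq => ?_⟩
  simp only [Prod.mk_add_mk, Prod.mk.injEq] at hpq
  obtain ⟨ha, hb⟩ := hpq
  have hNb : N ∣ b := (mem_saturationMonoid.1 hp).resolve_right fun h => by
    have : α ≤ a := h.1
    omega
  simp only [Prod.mk_eq_zero]
  rcases eq_zero_or_eq_of_dvd_of_lt_two_mul hNb (by omega) <;> omega

theorem addIrreducible_mk_one_zero :
    AddIrreducible (⟨(1, 0), Or.inl (dvd_zero N)⟩ : saturationMonoid α β N) := by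
  refine AddSubmonoid.addIrreducible_iff.2 ⟨by simp, fun ⟨a, b⟩ _ ⟨a', b'⟩ _ hpq => ?_⟩
  simp only [Prod.mk_add_mk, Prod.mk.injEq] at hpq
  simp only [Prod.mk_eq_zero]
  omega

theorem saturationGenerators_subset :
    saturationGenerators α β N ⊆ saturationMonoid α β N := by
  rintro g ((rfl | rfl) | ⟨r, -, rfl⟩)
  · exact Or.inl (dvd_zero N)
  · exact Or.inl (dvd_refl N)
  · exact mk_aperyElement_mem_saturationMonoid

theorem mk_mul_mem_closure_saturationGenerators (a q : ℕ) :
    (a, N * q) ∈ AddSubmonoid.closure (saturationGenerators α β N) := by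
  have h10 : ((1, 0) : ℕ × ℕ) ∈ saturationGenerators α β N := Or.inl (Or.inl rfl)
  have h0N : ((0, N) : ℕ × ℕ) ∈ saturationGenerators α β N := Or.inl (Or.inr rfl)
  convert add_mem (nsmul_mem (AddSubmonoid.subset_closure h10) a)
    (nsmul_mem (AddSubmonoid.subset_closure h0N) q) using 1
  simp [mul_comm]

theorem closure_saturationGenerators (hN : 0 < N) :
    AddSubmonoid.closure (saturationGenerators α β N) = saturationMonoid α β N := by
  refine le_antisymm (AddSubmonoid.closure_le.2 saturationGenerators_subset) ?_
  rintro ⟨a, b⟩ (⟨q, rfl⟩ | ⟨ha, hb⟩)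
  · exact mk_mul_mem_closure_saturationGenerators a q
  by_cases hNb : N ∣ b
  · obtain ⟨q, rfl⟩ := hNb
    exact mk_mul_mem_closure_saturationGenerators a q
  obtain ⟨q, hq⟩ := exists_eq_aperyElement_add (b := b) hb
  have hr : b % N ∈ Set.Ioo 0 N :=
    ⟨Nat.pos_of_ne_zero fun h => hNb (Nat.dvd_of_mod_eq_zero h), Nat.mod_lt b hN⟩
  have hab : (a, b) = (a - α, N * q) + (α, aperyElement β N (b % N)) := by
    ext <;> simp <;> omega
  rw [hab]
  exact add_mem (mk_mul_mem_closure_saturationGenerators _ q)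
    (AddSubmonoid.subset_closure (Or.inr ⟨_, hr, rfl⟩))

theorem notMem_closure_saturationGenerators_diff (hα : 1 ≤ α) (hN : 0 < N) :
    ∀ g ∈ saturationGenerators α β N,
      g ∉ AddSubmonoid.closure (saturationGenerators α β N \ {g}) := by
  rintro g ((rfl | rfl) | ⟨r, hr, rfl⟩)
  · exact addIrreducible_mk_one_zero.coe_notMem_closure_diff_singleton saturationGenerators_subset
  · exact (addIrreducible_mk_zero_N hα hN).coe_notMem_closure_diff_singleton
      saturationGenerators_subset
  · exact (addIrreducible_mk_aperyElement hα hr).coe_notMem_closure_diff_singleton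
      saturationGenerators_subset

theorem ncard_saturationGenerators (hα : 1 ≤ α) (hN : 0 < N) :
    (saturationGenerators α β N).ncard = N + 1 := by
  have hinj : Set.InjOn (fun r => (α, aperyElement β N r)) (Set.Ioo 0 N) := by
    intro r hr s hs hrs
    rw [← aperyElement_mod (β := β) hr.2, ← aperyElement_mod (β := β) hs.2]
    exact congrArg (· % N) (Prod.mk.inj hrs).2
  have hdisj : Disjoint ({(1, 0), (0, N)} : Set (ℕ × ℕ))
      ((fun r => (α, aperyElement β N r)) '' Set.Ioo 0 N) := by
    rw [Set.disjoint_left]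
    rintro g (rfl | rfl) ⟨r, ⟨hr0, -⟩, hg⟩ <;> simp only [Prod.mk.injEq] at hg
    · unfold aperyElement at hg
      split_ifs at hg <;> omega
    · omega
  rw [saturationGenerators, Set.ncard_union_eq hdisj, Set.ncard_pair (by simp),
    hinj.ncard_image, ← Finset.coe_Ioo, Set.ncard_coe_finset, Nat.card_Ioo]
  omega

theorem saturationGenerators_eq (hβ : 0 < β) (hβN : β < N) (hβdvd : ¬ β ∣ N) :
    saturationGenerators α β N = {(1, 0), (α, β), (0, N)} ∪
      ({p | ∃ i, 2 ≤ i ∧ i ≤ N / β ∧ p = (α, i * β)} ∪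
        {p | ∃ i, 1 ≤ i ∧ i ≤ N - 1 ∧ ¬ β ∣ i ∧ p = (α, N + i)}) := by
  have hmul_lt : ∀ i ≤ N / β, i * β < N := fun i hi =>
    lt_of_le_of_ne ((Nat.mul_le_mul_right β hi).trans (Nat.div_mul_le_self N β))
      fun h => hβdvd ⟨i, by rw [← h, mul_comm]⟩
  ext g
  constructor
  · rintro ((rfl | rfl) | ⟨r, ⟨hr0, hrN⟩, rfl⟩)
    · exact Or.inl (Or.inl rfl)
    · exact Or.inl (Or.inr (Or.inr rfl))
    dsimp only [aperyElement]
    split_ifs with hβr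
    · obtain ⟨i, rfl⟩ := hβr
      rcases Nat.lt_or_eq_of_le (Nat.pos_of_mul_pos_left hr0) with hi | rfl
      · refine Or.inr (Or.inl ⟨i, hi, (Nat.le_div_iff_mul_le hβ).2 ?_, by rw [mul_comm]⟩)
        rw [mul_comm]
        exact hrN.le
      · exact Or.inl (Or.inr (Or.inl (by simp)))
    · exact Or.inr (Or.inr ⟨r, hr0, by omega, hβr, rfl⟩)
  · rintro ((rfl | rfl | rfl) | ⟨i, hi, hiN, rfl⟩ | ⟨i, hi, hiN, hβi, rfl⟩)
    · exact Or.inl (Or.inl rfl)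
    · exact Or.inr ⟨β, ⟨hβ, hβN⟩, by simp [aperyElement]⟩
    · exact Or.inl (Or.inr rfl)
    · exact Or.inr ⟨i * β, ⟨by positivity, hmul_lt i hiN⟩, by simp [aperyElement]⟩
    · exact Or.inr ⟨i, ⟨hi, by omega⟩, by simp [aperyElement, hβi]⟩

end

/-- Case `β < N` of the minimal generating set of the saturated semigroup of the toric
hypersurface `y^N - x^{αN} z^β = 0`.  With `k = ⌊N/β⌋`, `T^s = β·ℕ ∪ [N, ∞)`,
`Γ^s = { (a,b) : N ∣ b, or (a ≥ α and b ∈ T^s) }`, `A = {(1,0), (α,β), (0,N)}` and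
`B = { (α, iβ) : 2 ≤ i ≤ k } ∪ { (α, N+i) : 1 ≤ i ≤ N-1, β ∤ i }`: the set `A ∪ B`
generates `Γ^s`, is minimal, and has exactly `N + 1` elements. -/
theorem minimal_generators_case_beta_lt_N (α β N k : ℕ)
    (hα : 1 ≤ α) (hβ : 2 ≤ β) (hβN : β < N) (hgcd : Nat.gcd β N = 1)
    (hk : k = N / β)
    (Ts : Set ℕ) (hTs : Ts = {n | ∃ m : ℕ, n = m * β} ∪ {n | N ≤ n})
    (Γs : Set (ℕ × ℕ)) (hΓs : Γs = {p : ℕ × ℕ | N ∣ p.2 ∨ (α ≤ p.1 ∧ p.2 ∈ Ts)})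
    (A B : Set (ℕ × ℕ))
    (hA : A = {(1, 0), (α, β), (0, N)})
    (hB : B = {p : ℕ × ℕ | ∃ i : ℕ, 2 ≤ i ∧ i ≤ k ∧ p = (α, i * β)} ∪
      {p : ℕ × ℕ | ∃ i : ℕ, 1 ≤ i ∧ i ≤ N - 1 ∧ ¬ β ∣ i ∧ p = (α, N + i)}) :
    (↑(AddSubmonoid.closure (A ∪ B)) = Γs) ∧
    (∀ g ∈ A ∪ B, g ∉ AddSubmonoid.closure ((A ∪ B) \ {g})) ∧
    (A ∪ B).ncard = N + 1 := by
  have hβdvd : ¬ β ∣ N := fun h => by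
    have := Nat.Coprime.eq_one_of_dvd hgcd h
    omega
  have hN : 0 < N := by omega
  have hΓ : Γs = saturationMonoid α β N := by
    subst hΓs hTs
    ext
    simp [mem_saturationMonoid, dvd_iff_exists_eq_mul_left]
  subst hk hA hB
  rw [← saturationGenerators_eq (by omega) hβN hβdvd, hΓ, closure_saturationGenerators hN]
  exact ⟨rfl, notMem_closure_saturationGenerators_diff hα hN,
    ncard_saturationGenerators hα hN⟩
end

section
/- Let Γ be the additive submonoid of ℕ² generated by {(1,0), (1,1), (0,2)}, and in ℂ[[x_1,x_2,y_1,y_2]] let I_Δ be the ideal generated by x_1 − y_1, x_1 x_2 − y_1 y_2 and x_2² − y_2². Then for every (a,b) ∈ ℕ², the element x_1^a x_2^b − y_1^a y_2^b is integral over I_Δ if and only if (a,b) ∈ Γ. -/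
namespace IsIntegralOverIdeal

variable {R : Type*} [CommRing R] {I : Ideal R} {f : R}

theorem of_mem (hf : f ∈ I) : IsIntegralOverIdeal I f := by
  refine ⟨1, one_pos, fun _ => -f, fun j hj hj' => ?_, by simp⟩
  obtain rfl : j = 1 := by omega
  simpa using hf

theorem isNilpotent_map {S : Type*} [CommRing S] (h : IsIntegralOverIdeal I f) (φ : R →+* S)
    (hφ : I ≤ RingHom.ker φ) : IsNilpotent (φ f) := by
  obtain ⟨m, -, a, ha, heq⟩ := h
  have hφa : ∀ j ∈ Finset.Icc 1 m, φ (a j) * φ f ^ (m - j) = 0 := fun j hj => by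
    rw [Finset.mem_Icc] at hj
    rw [hφ (Ideal.pow_le_self (by omega) (ha j hj.1 hj.2)), zero_mul]
  exact ⟨m, by simpa [Finset.sum_eq_zero hφa] using congrArg φ heq⟩

end IsIntegralOverIdeal

theorem mem_closure_umbrella_iff {p : ℕ × ℕ} :
    p ∈ AddSubmonoid.closure {(1, 0), (1, 1), (0, 2)} ↔ 0 < p.1 ∨ Even p.2 := by
  constructor
  · intro h
    induction h using AddSubmonoid.closure_induction with
    | mem q hq => rcases hq with rfl | rfl | rfl <;> decide
    | zero => decide
    | add q r _ _ hq hr =>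
      simp only [Prod.fst_add, Prod.snd_add, Nat.even_add] at *
      grind
  · obtain ⟨a, b⟩ := p
    have mem {q : ℕ × ℕ} (hq : q = (1, 0) ∨ q = (1, 1) ∨ q = (0, 2)) :
        q ∈ AddSubmonoid.closure {(1, 0), (1, 1), (0, 2)} :=
      AddSubmonoid.subset_closure hq
    intro hab
    obtain ⟨c, rfl | rfl⟩ := Nat.even_or_odd' b
    · have hsum : (a, 2 * c) = a • (1, 0) + c • (0, 2) := by ext <;> simp [mul_comm]
      rw [hsum]
      exact add_mem (nsmul_mem (mem (by simp)) a) (nsmul_mem (mem (by simp)) c)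
    · obtain ⟨a, rfl⟩ := Nat.exists_eq_add_one.mpr (by simpa [Nat.not_even_bit1] using hab)
      have hsum : (a + 1, 2 * c + 1) = (1, 1) + a • (1, 0) + c • (0, 2) := by
        ext <;> simp <;> ring
      rw [hsum]
      exact add_mem (add_mem (mem (by simp)) (nsmul_mem (mem (by simp)) a))
        (nsmul_mem (mem (by simp)) c)

theorem pow_mul_pow_eq_of_umbrella {M : Type*} [CommMonoid M] {x₁ x₂ y₁ y₂ : M} (h₁ : x₁ = y₁)
    (h₁₂ : x₁ * x₂ = y₁ * y₂) (h₂ : x₂ ^ 2 = y₂ ^ 2) {a b : ℕ} (hab : 0 < a ∨ Even b) :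
    x₁ ^ a * x₂ ^ b = y₁ ^ a * y₂ ^ b := by
  obtain ⟨c, rfl | rfl⟩ := Nat.even_or_odd' b
  · simp only [pow_mul, h₁, h₂]
  · obtain ⟨a, rfl⟩ := Nat.exists_eq_add_one.mpr (hab.resolve_right (by simp [Nat.not_even_bit1]))
    have split {u v : M} : u ^ (a + 1) * v ^ (2 * c + 1) = u * v * (u ^ a * (v ^ 2) ^ c) := by
      rw [pow_succ, pow_succ, pow_mul]
      ac_rfl
    rw [split, split, h₁₂, h₁, h₂]

theorem sub_mem_span_umbrella {R : Type*} [CommRing R] (x₁ x₂ y₁ y₂ : R) {a b : ℕ}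
    (hab : 0 < a ∨ Even b) :
    x₁ ^ a * x₂ ^ b - y₁ ^ a * y₂ ^ b ∈
      Ideal.span {x₁ - y₁, x₁ * x₂ - y₁ * y₂, x₂ ^ 2 - y₂ ^ 2} := by
  set I := Ideal.span {x₁ - y₁, x₁ * x₂ - y₁ * y₂, x₂ ^ 2 - y₂ ^ 2}
  have eq_of_mem {u v : R} (h : u - v ∈ ({x₁ - y₁, x₁ * x₂ - y₁ * y₂, x₂ ^ 2 - y₂ ^ 2} : Set R)) :
      Ideal.Quotient.mk I u = Ideal.Quotient.mk I v :=
    Ideal.Quotient.eq.mpr (Ideal.subset_span h)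
  rw [← Ideal.Quotient.eq, map_mul, map_mul, map_pow, map_pow, map_pow, map_pow]
  refine pow_mul_pow_eq_of_umbrella (eq_of_mem (by simp)) ?_ ?_ hab
  · rw [← map_mul, ← map_mul]
    exact eq_of_mem (by simp)
  · rw [← map_pow, ← map_pow]
    exact eq_of_mem (by simp)

open MvPowerSeries

section umbrellaSubst

variable (R : Type*) [CommRing R]

noncomputable def umbrellaSubst : MvPowerSeries (Fin 4) R →ₐ[R] PowerSeries R :=
  substAlgHom (a := ![0, PowerSeries.X, 0, -PowerSeries.X]) <|
    hasSubst_of_constantCoeff_zero fun s => by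
      fin_cases s <;> simp <;> exact PowerSeries.constantCoeff_X

theorem umbrellaSubst_X (i : Fin 4) :
    umbrellaSubst R (X i) = ![0, PowerSeries.X, 0, -PowerSeries.X] i :=
  substAlgHom_X _ i

theorem span_umbrella_le_ker_umbrellaSubst :
    Ideal.span {X 0 - X 2, X 0 * X 1 - X 2 * X 3, X 1 ^ 2 - X 3 ^ 2} ≤
      RingHom.ker (umbrellaSubst R) := by
  rw [Ideal.span_le]
  rintro g (rfl | rfl | rfl) <;> simp [umbrellaSubst_X]

theorem umbrellaSubst_X_one_pow_sub_X_three_pow {b : ℕ} (hb : Odd b) :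
    umbrellaSubst R (X 1 ^ b - X 3 ^ b) = 2 • PowerSeries.X ^ b := by
  simp [umbrellaSubst_X, hb.neg_pow, ← two_nsmul]

theorem umbrellaSubst_X_one_pow_sub_X_three_pow_ne_zero [CharZero R] {b : ℕ} (hb : Odd b) :
    umbrellaSubst R (X 1 ^ b - X 3 ^ b) ≠ 0 := by
  rw [umbrellaSubst_X_one_pow_sub_X_three_pow R hb]
  intro h
  have hcoeff := congrArg (PowerSeries.coeff b) h
  rw [map_nsmul, PowerSeries.coeff_X_pow_self, map_zero] at hcoeff
  simp at hcoeff

end umbrellaSubst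

open MvPowerSeries in
/-- The Whitney Umbrella `y² - x²z = 0` is Lipschitz saturated: with `Γ ⊆ ℕ²` the submonoid
generated by `(1,0), (1,1), (0,2)` and `I_Δ = ⟨x_1 - y_1, x_1 x_2 - y_1 y_2, x_2² - y_2²⟩` in
`ℂ[[x_1,x_2,y_1,y_2]]` (variables `x_1 = X 0`, `x_2 = X 1`, `y_1 = X 2`, `y_2 = X 3`),
the element `x_1^a x_2^b - y_1^a y_2^b` is integral over `I_Δ` iff `(a,b) ∈ Γ`. -/
theorem whitney_umbrella_saturated
    (Γ : AddSubmonoid (ℕ × ℕ))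
    (hΓ : Γ = AddSubmonoid.closure {(1, 0), (1, 1), (0, 2)})
    (IΔ : Ideal (MvPowerSeries (Fin 4) ℂ))
    (hIΔ : IΔ = Ideal.span {X 0 - X 2, X 0 * X 1 - X 2 * X 3, X 1 ^ 2 - X 3 ^ 2}) :
    ∀ a b : ℕ,
      IsIntegralOverIdeal IΔ (X 0 ^ a * X 1 ^ b - X 2 ^ a * X 3 ^ b) ↔ (a, b) ∈ Γ := by
  subst hΓ hIΔ
  intro a b
  rw [mem_closure_umbrella_iff]
  refine ⟨fun h => ?_, fun hab => .of_mem (sub_mem_span_umbrella _ _ _ _ hab)⟩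
  by_contra! hab
  obtain rfl : a = 0 := by omega
  apply umbrellaSubst_X_one_pow_sub_X_three_pow_ne_zero ℂ (Nat.not_even_iff_odd.mp hab.2)
  simpa using (h.isNilpotent_map (umbrellaSubst ℂ).toRingHom
    (span_umbrella_le_ker_umbrellaSubst ℂ)).eq_zero
end

section
/- Let p and q be integers with 2 ≤ p < q and gcd(p,q) = 1. Then the set S = { mp : m ∈ ℕ } ∪ { n ∈ ℕ : n ≥ q } is an additive submonoid of ℕ; the set G = {p} ∪ { n : q ≤ n ≤ q + p − 1 and p does not divide n } generates S as an additive monoid; for every g ∈ G, g does not belong to the additive submonoid generated by G \ {g}; and G has exactly p elements. -/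
/-!
Write `S = pℕ ∪ [q, ∞)`. It is closed under addition, and every `n ≥ q` with `p ∤ n` is
`r + m p` for the unique `r ∈ [q, q + p)` congruent to `n` mod `p`, so `p` together with the
non-multiples of `p` in `[q, q + p)` generate `S`. Each of these generators is irreducible in
`S` (not a sum of two nonzero elements), and an irreducible element never lies in the monoid
generated by the other elements of `S`. Finally `p` consecutive integers contain exactly
`p - 1` non-multiples of `p`.
-/

open Finset

theorem AddSubmonoid.notMem_closure_diff_singleton {A : Type*} [AddMonoid A]
    {M : AddSubmonoid A} {T : Set A} {g : A} (hT : T ⊆ M) (hg : g ≠ 0)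
    (hirr : ∀ a ∈ M, ∀ b ∈ M, a + b = g → a = 0 ∨ b = 0) :
    g ∉ closure (T \ {g}) := by
  intro hmem
  suffices ∀ x ∈ closure (T \ {g}), x ∈ M ∧ x ≠ g from (this g hmem).2 rfl
  intro x hx
  induction hx using closure_induction with
  | mem x hx => exact ⟨hT hx.1, hx.2⟩
  | zero => exact ⟨zero_mem M, hg.symm⟩
  | add x y _ _ hx hy =>
    refine ⟨add_mem hx.1 hy.1, fun hxy => ?_⟩
    rcases hirr x hx.1 y hy.1 hxy with rfl | rfl
    · exact hy.2 (by simpa using hxy)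
    · exact hx.2 (by simpa using hxy)

theorem Nat.count_not_dvd_self (p : ℕ) : Nat.count (fun n => ¬p ∣ n) p = p - 1 := by
  have hfilter : {n ∈ range p | ¬p ∣ n} = Ioo 0 p := by
    ext n
    simp only [mem_filter, mem_range, mem_Ioo]
    exact ⟨fun ⟨h, hd⟩ => ⟨Nat.pos_of_ne_zero fun h0 => hd (h0 ▸ dvd_zero p), h⟩,
      fun ⟨h0, h⟩ => ⟨h, fun hd => (Nat.eq_zero_of_dvd_of_lt hd h).not_gt h0⟩⟩
  rw [Nat.count_eq_card_filter_range, hfilter, Nat.card_Ioo, Nat.sub_zero]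

def saturatedSemigroup (p q : ℕ) : AddSubmonoid ℕ where
  carrier := {n | p ∣ n ∨ q ≤ n}
  add_mem' := by
    rintro a b (ha | ha) (hb | hb)
    · exact Or.inl (dvd_add ha hb)
    all_goals exact Or.inr (by omega)
  zero_mem' := Or.inl (dvd_zero p)

def saturatedSemigroupGens (p q : ℕ) : Finset ℕ :=
  insert p {n ∈ Ico q (q + p) | ¬p ∣ n}

namespace saturatedSemigroup

variable {p q : ℕ}

theorem gens_subset : (saturatedSemigroupGens p q : Set ℕ) ⊆ saturatedSemigroup p q := by
  intro n hn
  rcases mem_insert.mp hn with rfl | hn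
  · exact Or.inl dvd_rfl
  · exact Or.inr (mem_Ico.mp (mem_filter.mp hn).1).1

theorem closure_gens (hp : 0 < p) :
    AddSubmonoid.closure (saturatedSemigroupGens p q : Set ℕ) = saturatedSemigroup p q := by
  set C := AddSubmonoid.closure (saturatedSemigroupGens p q : Set ℕ)
  refine le_antisymm (AddSubmonoid.closure_le.mpr gens_subset) fun n hn => ?_
  have multiple_mem (m : ℕ) : p * m ∈ C := by
    have := AddSubmonoid.nsmul_mem C (AddSubmonoid.subset_closure (mem_insert_self _ _)) m
    rwa [smul_eq_mul, mul_comm] at this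
  by_cases hdvd : p ∣ n
  · obtain ⟨m, rfl⟩ := hdvd
    exact multiple_mem m
  have hqn : q ≤ n := hn.resolve_left hdvd
  set r := q + (n - q) % p
  have hn_eq : n = r + p * ((n - q) / p) := by
    have := Nat.mod_add_div (n - q) p
    omega
  have hr : r ∈ saturatedSemigroupGens p q := by
    refine mem_insert_of_mem (mem_filter.mpr ⟨mem_Ico.mpr ⟨by omega, ?_⟩, fun hr => hdvd ?_⟩)
    · have := Nat.mod_lt (n - q) hp
      omega
    · rw [hn_eq]
      exact dvd_add hr (dvd_mul_right p _)
  rw [hn_eq]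
  exact add_mem (AddSubmonoid.subset_closure hr) (multiple_mem _)

theorem pos_of_mem_gens (hp : 0 < p) (hpq : p < q) {g : ℕ}
    (hg : g ∈ saturatedSemigroupGens p q) : 0 < g := by
  rcases mem_insert.mp hg with rfl | hg
  · exact hp
  · have := (mem_Ico.mp (mem_filter.mp hg).1).1
    omega

theorem eq_zero_or_eq_zero_of_add_eq_gen (hpq : p < q) {a b g : ℕ}
    (hg : g ∈ saturatedSemigroupGens p q) (ha : a ∈ saturatedSemigroup p q)
    (hb : b ∈ saturatedSemigroup p q) (hab : a + b = g) : a = 0 ∨ b = 0 := by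
  simp only [saturatedSemigroupGens, mem_insert, mem_filter, mem_Ico] at hg
  rcases hg with rfl | ⟨⟨hqg, hgq⟩, hg⟩
  · rcases ha with ha | ha <;> [skip; omega]
    by_contra! hne
    have := Nat.le_of_dvd (Nat.pos_of_ne_zero hne.1) ha
    omega
  · rcases ha with ha | ha <;> rcases hb with hb | hb
    · exact absurd (hab ▸ dvd_add ha hb) hg
    · exact Or.inl (Nat.eq_zero_of_dvd_of_lt ha (by omega))
    · exact Or.inr (Nat.eq_zero_of_dvd_of_lt hb (by omega))
    · omega

theorem card_gens (hp : 0 < p) (hpq : p < q) : (saturatedSemigroupGens p q).card = p := by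
  have hperiodic : Function.Periodic (fun n => ¬p ∣ n) p := fun n => by
    simp [Nat.dvd_add_self_right]
  rw [saturatedSemigroupGens, card_insert_of_notMem (by simp [hpq.not_ge]),
    Nat.filter_Ico_card_eq_of_periodic _ _ _ hperiodic, Nat.count_not_dvd_self]
  omega

end saturatedSemigroup

theorem saturated_numerical_semigroup_generators_general (p q : ℕ)
    (hp : 2 ≤ p) (hpq : p < q)
    (S G : Set ℕ)
    (hS : S = {n | ∃ m : ℕ, n = m * p} ∪ {n | q ≤ n})
    (hG : G = {p} ∪ {n | q ≤ n ∧ n ≤ q + p - 1 ∧ ¬ p ∣ n}) :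
    (∃ M : AddSubmonoid ℕ, ↑M = S) ∧
    (↑(AddSubmonoid.closure G) = S) ∧
    (∀ g ∈ G, g ∉ AddSubmonoid.closure (G \ {g})) ∧
    G.ncard = p := by
  have hp0 : 0 < p := by omega
  have hS' : S = saturatedSemigroup p q := by
    ext n
    simp [hS, saturatedSemigroup, Dvd.dvd, mul_comm]
  have hG' : G = saturatedSemigroupGens p q := by
    ext n
    simp only [hG, saturatedSemigroupGens, coe_insert, coe_filter, mem_Ico, Set.singleton_union,
      Set.mem_insert_iff, Set.mem_ofPred_eq]
    omega
  subst hS' hG'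
  refine ⟨⟨_, rfl⟩, congrArg _ (saturatedSemigroup.closure_gens hp0), fun g hg => ?_, ?_⟩
  · exact AddSubmonoid.notMem_closure_diff_singleton saturatedSemigroup.gens_subset
      (saturatedSemigroup.pos_of_mem_gens hp0 hpq hg).ne' fun a ha b hb =>
        saturatedSemigroup.eq_zero_or_eq_zero_of_add_eq_gen hpq hg ha hb
  · rw [Set.ncard_coe_finset, saturatedSemigroup.card_gens hp0 hpq]

/-- Let `2 ≤ p < q` with `gcd(p,q) = 1`.  The set `S = pℕ ∪ [q, ∞)` (the saturation of the
numerical semigroup generated by `p` and `q`) is an additive submonoid of `ℕ`; the set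
`G = {p} ∪ { n : q ≤ n ≤ q + p - 1, p ∤ n }` generates `S`; `G` is a minimal generating set;
and `G` has exactly `p` elements. -/
theorem saturated_numerical_semigroup_generators (p q : ℕ)
    (hp : 2 ≤ p) (hpq : p < q) (hgcd : Nat.gcd p q = 1)
    (S G : Set ℕ)
    (hS : S = {n | ∃ m : ℕ, n = m * p} ∪ {n | q ≤ n})
    (hG : G = {p} ∪ {n | q ≤ n ∧ n ≤ q + p - 1 ∧ ¬ p ∣ n}) :
    (∃ M : AddSubmonoid ℕ, ↑M = S) ∧
    (↑(AddSubmonoid.closure G) = S) ∧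
    (∀ g ∈ G, g ∉ AddSubmonoid.closure (G \ {g})) ∧
    G.ncard = p :=
  saturated_numerical_semigroup_generators_general p q hp hpq S G hS hG
end

section
/- Let d ≥ 1, let A be a finite subset of ℤ^d, and let m ∈ ℤ^d. If there exist nonnegative real numbers λ_a (a ∈ A) such that m = Σ_{a ∈ A} λ_a • a in ℝ^d (identifying ℤ^d with its image in ℝ^d), then there exists an integer k ≥ 1 such that k • m belongs to the additive submonoid of ℤ^d generated by A. -/
/-!
By Carathéodory's theorem for cones we may assume that the generators carrying the
coefficients are linearly independent over `ℝ`. Linear independence of integer vectors is the same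
over `ℤ` and over `ℝ`, so adjoining `m` to them yields an integer relation `k • m = ∑ z a • a` with
`k ≠ 0`. Uniqueness of real coordinates forces `z a = k * λ a`, so multiplying once more by `k`
makes all coefficients nonnegative integers.
-/

open Finset Submodule

section Caratheodory

variable {ι 𝕜 E : Type*} [Field 𝕜] [LinearOrder 𝕜] [IsStrictOrderedRing 𝕜]
  [AddCommGroup E] [Module 𝕜 E]

theorem Finset.exists_nonneg_sub_mul_eq_zero (s : Finset ι) {c g : ι → 𝕜}
    (hc : ∀ i ∈ s, 0 ≤ c i) (hg : ∃ i ∈ s, 0 < g i) :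
    ∃ j ∈ s, ∃ r : 𝕜, (∀ i ∈ s, 0 ≤ c i - r * g i) ∧ c j - r * g j = 0 := by
  obtain ⟨j, hj, hmin⟩ := (s.filter (0 < g ·)).exists_min_image (fun i => c i / g i)
    (by simpa [Finset.Nonempty] using hg)
  rw [mem_filter] at hj
  refine ⟨j, hj.1, c j / g j, fun i hi => ?_, by field_simp [hj.2.ne']; ring⟩
  rcases lt_or_ge 0 (g i) with hgi | hgi
  · rw [sub_nonneg, ← le_div_iff₀ hgi]
    exact hmin i (mem_filter.2 ⟨hi, hgi⟩)
  · have : c j / g j * g i ≤ 0 :=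
      mul_nonpos_of_nonneg_of_nonpos (div_nonneg (hc j hj.1) hj.2.le) hgi
    linarith [hc i hi]

theorem exists_mem_nonneg_sum_erase_eq_of_not_linearIndepOn [DecidableEq ι] {v : ι → E}
    {s : Finset ι} (hs : ¬LinearIndepOn 𝕜 v s) {c : ι → 𝕜} (hc : ∀ i ∈ s, 0 ≤ c i) :
    ∃ j ∈ s, ∃ c' : ι → 𝕜, (∀ i ∈ s.erase j, 0 ≤ c' i) ∧
      ∑ i ∈ s.erase j, c' i • v i = ∑ i ∈ s, c i • v i := by
  obtain ⟨f, hf, i, hi, hfi⟩ := not_linearIndepOn_finset_iff.1 hs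
  obtain ⟨g, hg, hgpos⟩ : ∃ g : ι → 𝕜, ∑ i ∈ s, g i • v i = 0 ∧ ∃ i ∈ s, 0 < g i := by
    rcases hfi.lt_or_gt with hneg | hpos
    · exact ⟨-f, by simp [neg_smul, sum_neg_distrib, hf], i, hi, by simpa using hneg⟩
    · exact ⟨f, hf, i, hi, hpos⟩
  obtain ⟨j, hj, r, hnn, hzero⟩ := s.exists_nonneg_sub_mul_eq_zero hc hgpos
  refine ⟨j, hj, fun i => c i - r * g i, fun i hi => hnn i (mem_of_mem_erase hi), ?_⟩
  rw [sum_erase _ (by simp [hzero])]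
  simp [sub_smul, mul_smul, sum_sub_distrib, ← smul_sum, hg]

theorem exists_subset_linearIndepOn_nonneg_sum_eq (v : ι → E) (s : Finset ι) {c : ι → 𝕜}
    (hc : ∀ i ∈ s, 0 ≤ c i) :
    ∃ t ⊆ s, LinearIndepOn 𝕜 v t ∧ ∃ μ : ι → 𝕜, (∀ i ∈ t, 0 ≤ μ i) ∧
      ∑ i ∈ t, μ i • v i = ∑ i ∈ s, c i • v i := by
  classical
  induction s using Finset.strongInduction generalizing c with
  | H s ih =>
    by_cases hs : LinearIndepOn 𝕜 v s
    · exact ⟨s, subset_rfl, hs, c, hc, rfl⟩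
    obtain ⟨j, hj, c', hc', hsum⟩ := exists_mem_nonneg_sum_erase_eq_of_not_linearIndepOn hs hc
    obtain ⟨t, hts, ht, μ, hμ, hμsum⟩ := ih _ (erase_ssubset hj) hc'
    exact ⟨t, hts.trans (erase_subset j s), ht, μ, hμ, hμsum.trans hsum⟩

end Caratheodory

theorem exists_smul_mem_span_of_algebraMap_comp_mem_span {ι ι' R K : Type*} [Fintype ι]
    [Finite ι'] [CommRing R] [Field K] [Algebra R K] [FaithfulSMul R K] {v : ι → ι' → R}
    (hv : LinearIndependent K fun i => algebraMap R K ∘ v i) {m : ι' → R}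
    (hm : algebraMap R K ∘ m ∈ span K (Set.range fun i => algebraMap R K ∘ v i)) :
    ∃ k ≠ (0 : R), k • m ∈ span R (Set.range v) := by
  have hvR : LinearIndependent R v := linearIndependent_algebraMap_comp_iff.1 hv
  have hdep : ¬LinearIndependent K fun o : Option ι => algebraMap R K ∘ o.elim m v := by
    rw [linearIndependent_option]
    exact fun h => h.2 hm
  rw [linearIndependent_algebraMap_comp_iff, Fintype.not_linearIndependent_iff] at hdep
  obtain ⟨g, hg, o, ho⟩ := hdep
  rw [Fintype.sum_option] at hg
  have hk : g none ≠ 0 := by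
    intro h0
    rw [h0, zero_smul, zero_add] at hg
    cases o with
    | none => exact ho h0
    | some i => exact ho (Fintype.linearIndependent_iff.1 hvR _ hg i)
  refine ⟨g none, hk, (mem_span_range_iff_exists_fun R).2 ⟨fun i => -g (some i), ?_⟩⟩
  simp only [neg_smul, sum_neg_distrib]
  exact neg_eq_of_add_eq_zero_left hg

theorem exists_pos_nsmul_eq_sum_nsmul_of_nonneg_repr {ι ι' K : Type*} [Fintype ι] [Finite ι']
    [Field K] [LinearOrder K] [IsStrictOrderedRing K] {v : ι → ι' → ℤ}
    (hv : LinearIndependent K fun i j => (v i j : K)) {m : ι' → ℤ} {μ : ι → K}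
    (hμ : ∀ i, 0 ≤ μ i) (hm : (fun j => (m j : K)) = ∑ i, μ i • fun j => (v i j : K)) :
    ∃ k : ℕ, 0 < k ∧ ∃ n : ι → ℕ, k • m = ∑ i, n i • v i := by
  have hv' : LinearIndependent K fun i => algebraMap ℤ K ∘ v i := by
    simpa [Function.comp_def] using hv
  obtain ⟨k, hk, hkm⟩ := exists_smul_mem_span_of_algebraMap_comp_mem_span hv'
    ((mem_span_range_iff_exists_fun K).2 ⟨μ, by simpa [Function.comp_def] using hm.symm⟩)
  obtain ⟨z, hz⟩ := (mem_span_range_iff_exists_fun ℤ).1 hkm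
  have hzμ : ∀ i, (z i : K) = k * μ i := by
    refine congrFun (hv.fintypeLinearCombination_injective ?_)
    simp only [Fintype.linearCombination_apply]
    calc ∑ i, (z i : K) • (fun j => (v i j : K))
        = fun j => (((k • m) j : ℤ) : K) := by rw [← hz]; ext j; simp [Finset.sum_apply]
      _ = (k : K) • fun j => (m j : K) := by ext j; simp
      _ = ∑ i, (k * μ i : K) • (fun j => (v i j : K)) := by rw [hm, smul_sum]; simp [mul_smul]
  -- `k` may be negative, but `k * z i = k ^ 2 * μ i` is not.
  have hkz : ∀ i, 0 ≤ k * z i := fun i => by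
    have : (0 : K) ≤ k * z i := by
      rw [hzμ, ← mul_assoc]
      exact mul_nonneg (mul_self_nonneg _) (hμ i)
    exact_mod_cast this
  refine ⟨(k * k).toNat, by simpa using hk, fun i => (k * z i).toNat, ?_⟩
  calc (k * k).toNat • m = k • k • m := by
        rw [← natCast_zsmul, Int.toNat_of_nonneg (mul_self_nonneg k), mul_smul]
    _ = ∑ i, (k * z i).toNat • v i := by
        simp only [← hz, smul_sum, smul_smul, ← natCast_zsmul, Int.toNat_of_nonneg (hkz _)]

theorem multiple_in_semigroup_of_mem_cone_general (d : ℕ)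
    (A : Finset (Fin d → ℤ)) (m : Fin d → ℤ) (lam : (Fin d → ℤ) → ℝ)
    (hnn : ∀ a ∈ A, 0 ≤ lam a)
    (hm : (fun i => (m i : ℝ)) = ∑ a ∈ A, lam a • (fun i => (a i : ℝ))) :
    ∃ k : ℕ, 1 ≤ k ∧ k • m ∈ AddSubmonoid.closure (A : Set (Fin d → ℤ)) := by
  obtain ⟨t, htA, ht, μ, hμ, hμsum⟩ :=
    exists_subset_linearIndepOn_nonneg_sum_eq (fun a i => (a i : ℝ)) A hnn
  obtain ⟨k, hk, n, hkn⟩ := exists_pos_nsmul_eq_sum_nsmul_of_nonneg_repr ht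
    (μ := fun a => μ a) (fun a => hμ a a.2) (by rw [hm, ← hμsum, ← sum_coe_sort t]; rfl)
  refine ⟨k, hk, hkn ▸ AddSubmonoid.sum_mem _ fun a _ => ?_⟩
  exact AddSubmonoid.nsmul_mem _ (AddSubmonoid.subset_closure (htA a.2)) _

/-- If `m ∈ ℤ^d` lies in the real cone spanned with nonnegative coefficients by a finite set
`A ⊆ ℤ^d`, then some positive multiple `k • m` lies in the additive submonoid of `ℤ^d`
generated by `A`. -/
theorem multiple_in_semigroup_of_mem_cone (d : ℕ) (hd : 1 ≤ d)
    (A : Finset (Fin d → ℤ)) (m : Fin d → ℤ) (lam : (Fin d → ℤ) → ℝ)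
    (hnn : ∀ a ∈ A, 0 ≤ lam a)
    (hm : (fun i => (m i : ℝ)) = ∑ a ∈ A, lam a • (fun i => (a i : ℝ))) :
    ∃ k : ℕ, 1 ≤ k ∧ k • m ∈ AddSubmonoid.closure (A : Set (Fin d → ℤ)) :=
  multiple_in_semigroup_of_mem_cone_general d A m lam hnn hm
end
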